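/- Fix c ≤ 0. For each a, b ∈ ℝ define G(a, b) = ∫_{-∞}^{c} φ(η) Φ(b - aη) dη. Then G is strictly increasing in a and strictly increasing in b. Consequently, each level set {(a,b) : G(a,b) = p} with p ∈ (0, Φ(c)) is the graph of a strictly decreasing function b₂(a). -/

import Mathlib

open MeasureTheory

/-- The standard normal density. -/
noncomputable def phi (x : ℝ) : ℝ := Real.exp (-x ^ 2 / 2) / Real.sqrt (2 * Real.pi)

/-- The standard normal cumulative distribution function. -/
noncomputable def Phi (x : ℝ) : ℝ := ∫ t in Set.Iic x, phi t

lemma phi_pos (x : ℝ) : 0 < phi x :=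
  div_pos (Real.exp_pos _) (Real.sqrt_pos.2 (by positivity))

lemma phi_continuous : Continuous phi := by
  unfold phi; fun_prop

lemma phi_integrable : Integrable phi := by
  have h : Integrable (fun x : ℝ => Real.exp (-(1/2) * x ^ 2)) := integrable_exp_neg_mul_sq (by norm_num)
  have := h.div_const (Real.sqrt (2 * Real.pi))
  refine this.congr (Filter.Eventually.of_forall fun x => ?_)
  unfold phi; ring_nf

lemma integral_phi : ∫ x, phi x = 1 := by
  unfold phi
  rw [integral_div]
  have : (fun x : ℝ => Real.exp (-x ^ 2 / 2)) = fun x : ℝ => Real.exp (-(1/2) * x ^ 2) := by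
    funext x; ring_nf
  rw [this, integral_gaussian]
  rw [div_eq_one_iff_eq (by positivity)]
  norm_num
  ring

lemma Phi_nonneg (x : ℝ) : 0 ≤ Phi x :=
  setIntegral_nonneg measurableSet_Iic fun t _ => (phi_pos t).le

lemma Phi_le_one (x : ℝ) : Phi x ≤ 1 := by
  rw [← integral_phi]
  exact setIntegral_le_integral phi_integrable
    (Filter.Eventually.of_forall fun t => (phi_pos t).le)

lemma Phi_sub (x y : ℝ) : Phi y - Phi x = ∫ t in x..y, phi t :=
  (intervalIntegral.integral_Iic_sub_Iic phi_integrable.integrableOn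
    phi_integrable.integrableOn)

lemma Phi_strictMono : StrictMono Phi := by
  intro x y hxy
  have h := intervalIntegral.intervalIntegral_pos_of_pos
    phi_integrable.intervalIntegrable phi_pos hxy
  have := Phi_sub x y
  linarith

lemma Phi_continuous : Continuous Phi := by
  have h : Continuous fun x => ∫ t in (0:ℝ)..x, phi t :=
    intervalIntegral.continuous_primitive (fun a b => phi_integrable.intervalIntegrable) 0
  have : Phi = fun x => Phi 0 + ∫ t in (0:ℝ)..x, phi t := by
    funext x; rw [← Phi_sub]; ring
  rw [this]
  exact continuous_const.add h

lemma Phi_tendsto_atTop : Filter.Tendsto Phi Filter.atTop (nhds 1) := by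
  have := MeasureTheory.tendsto_integral_filter_of_dominated_convergence (μ := volume)
    (F := fun x : ℝ => Set.indicator (Set.Iic x) phi) (f := phi) (bound := phi)
    (l := Filter.atTop)
    (Filter.Eventually.of_forall fun x =>
      (phi_continuous.aestronglyMeasurable.indicator measurableSet_Iic))
    (Filter.Eventually.of_forall fun x => Filter.Eventually.of_forall fun t => by
      rw [Real.norm_eq_abs, abs_of_nonneg (Set.indicator_nonneg (fun s _ => (phi_pos s).le) t)]
      by_cases h : t ∈ Set.Iic x
      · simp [Set.indicator_of_mem h]
      · simp [Set.indicator_of_notMem h, (phi_pos t).le])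
    phi_integrable
    (Filter.Eventually.of_forall fun t => by
      refine Filter.Tendsto.congr' ?_ tendsto_const_nhds
      filter_upwards [Filter.eventually_ge_atTop t] with x hx
      simp [Set.indicator_of_mem (Set.mem_Iic.2 hx)])
  rw [integral_phi] at this
  refine this.congr fun x => ?_
  rw [integral_indicator measurableSet_Iic]
  rfl

lemma Phi_tendsto_atBot : Filter.Tendsto Phi Filter.atBot (nhds 0) := by
  have := MeasureTheory.tendsto_integral_filter_of_dominated_convergence (μ := volume)
    (F := fun x : ℝ => Set.indicator (Set.Iic x) phi) (f := fun _ => (0:ℝ)) (bound := phi)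
    (l := Filter.atBot)
    (Filter.Eventually.of_forall fun x =>
      (phi_continuous.aestronglyMeasurable.indicator measurableSet_Iic))
    (Filter.Eventually.of_forall fun x => Filter.Eventually.of_forall fun t => by
      rw [Real.norm_eq_abs, abs_of_nonneg (Set.indicator_nonneg (fun s _ => (phi_pos s).le) t)]
      by_cases h : t ∈ Set.Iic x
      · simp [Set.indicator_of_mem h]
      · simp [Set.indicator_of_notMem h, (phi_pos t).le])
    phi_integrable
    (Filter.Eventually.of_forall fun t => by
      refine Filter.Tendsto.congr' ?_ tendsto_const_nhds
      filter_upwards [Filter.eventually_lt_atBot t] with x hx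
      simp [Set.indicator_of_notMem (by simpa using hx.not_ge : t ∉ Set.Iic x)])
  rw [integral_zero] at this
  refine this.congr fun x => ?_
  rw [integral_indicator measurableSet_Iic]
  rfl

/-- `G(a, b) = ∫_{-∞}^{c} φ(η) Φ(b - aη) dη`. -/
noncomputable def G (c a b : ℝ) : ℝ := ∫ η in Set.Iic c, phi η * Phi (b - a * η)

lemma G_integrable (c a b : ℝ) :
    IntegrableOn (fun η => phi η * Phi (b - a * η)) (Set.Iic c) := by
  refine Integrable.mono (phi_integrable.integrableOn)
    ((phi_continuous.mul (Phi_continuous.comp (by fun_prop))).aestronglyMeasurable)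
    (Filter.Eventually.of_forall fun η => ?_)
  rw [Real.norm_eq_abs, Real.norm_eq_abs,
    abs_of_nonneg (mul_nonneg (phi_pos η).le (Phi_nonneg _)),
    abs_of_nonneg (phi_pos η).le]
  calc phi η * Phi (b - a * η) ≤ phi η * 1 :=
        mul_le_mul_of_nonneg_left (Phi_le_one _) (phi_pos η).le
    _ = phi η := mul_one _

/-- Key positivity lemma: if the increment is nonneg on `Iic c` and positive on `Iio c`,
the difference of the Gs is positive. -/
lemma G_lt_G {c a b a' b' : ℝ}
    (h0 : ∀ η ∈ Set.Iic c, Phi (b - a * η) ≤ Phi (b' - a' * η))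
    (h1 : ∀ η ∈ Set.Iio c, Phi (b - a * η) < Phi (b' - a' * η)) :
    G c a b < G c a' b' := by
  have hsub : G c a' b' - G c a b
      = ∫ η in Set.Iic c, phi η * (Phi (b' - a' * η) - Phi (b - a * η)) := by
    rw [G, G, ← integral_sub (G_integrable c a' b') (G_integrable c a b)]
    congr 1; funext η; ring
  have hnn : 0 ≤ᵐ[volume.restrict (Set.Iic c)]
      fun η => phi η * (Phi (b' - a' * η) - Phi (b - a * η)) := by
    rw [Filter.EventuallyLE, ae_restrict_iff' measurableSet_Iic]
    exact Filter.Eventually.of_forall fun η hη =>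
      mul_nonneg (phi_pos η).le (sub_nonneg.2 (h0 η hη))
  have hint : Integrable (fun η => phi η * (Phi (b' - a' * η) - Phi (b - a * η)))
      (volume.restrict (Set.Iic c)) := by
    have := (G_integrable c a' b').sub (G_integrable c a b)
    refine this.congr (Filter.Eventually.of_forall fun η => by simp [Pi.sub_apply]; ring)
  have hpos : 0 < ∫ η in Set.Iic c, phi η * (Phi (b' - a' * η) - Phi (b - a * η)) := by
    rw [integral_pos_iff_support_of_nonneg_ae hnn hint]
    refine lt_of_lt_of_le ?_ (measure_mono (s := Set.Iio c)
      (fun η hη => ne_of_gt (mul_pos (phi_pos η)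
        (sub_pos.2 (h1 η hη)))))
    rw [Measure.restrict_apply' measurableSet_Iic,
      Set.inter_eq_left.2 (Set.Iio_subset_Iic_self), Real.volume_Iio]
    simp
  linarith

lemma G_strictMono_b (c a : ℝ) : StrictMono fun b : ℝ => G c a b := by
  intro b b' hbb
  exact G_lt_G (fun η _ => (Phi_strictMono.le_iff_le.2 (by linarith)))
    (fun η _ => Phi_strictMono (by linarith))

lemma G_strictMono_a (c : ℝ) (hc : c ≤ 0) (b : ℝ) : StrictMono fun a : ℝ => G c a b := by
  intro a a' haa
  refine G_lt_G (fun η hη => Phi_strictMono.le_iff_le.2 ?_) (fun η hη => Phi_strictMono ?_)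
  · have hη0 : η ≤ 0 := le_trans hη hc
    nlinarith
  · have hη0 : η < 0 := lt_of_lt_of_le hη hc
    nlinarith

lemma G_tendsto_atTop (c a : ℝ) :
    Filter.Tendsto (fun b => G c a b) Filter.atTop (nhds (Phi c)) := by
  have := MeasureTheory.tendsto_integral_filter_of_dominated_convergence
    (μ := volume.restrict (Set.Iic c))
    (F := fun b : ℝ => fun η => phi η * Phi (b - a * η)) (f := phi) (bound := phi)
    (l := Filter.atTop)
    (Filter.Eventually.of_forall fun b =>
      ((phi_continuous.mul (Phi_continuous.comp (by fun_prop))).aestronglyMeasurable))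
    (Filter.Eventually.of_forall fun b => Filter.Eventually.of_forall fun η => by
      rw [Real.norm_eq_abs, abs_of_nonneg (mul_nonneg (phi_pos η).le (Phi_nonneg _))]
      calc phi η * Phi (b - a * η) ≤ phi η * 1 :=
            mul_le_mul_of_nonneg_left (Phi_le_one _) (phi_pos η).le
        _ = phi η := mul_one _)
    phi_integrable.integrableOn
    (Filter.Eventually.of_forall fun η => by
      have h1 : Filter.Tendsto (fun b : ℝ => b - a * η) Filter.atTop Filter.atTop :=
        Filter.tendsto_atTop_add_const_right _ _ Filter.tendsto_id
      have := (Phi_tendsto_atTop.comp h1).const_mul (phi η)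
      simpa using this)
  simpa [G, Phi] using this

lemma G_tendsto_atBot (c a : ℝ) :
    Filter.Tendsto (fun b => G c a b) Filter.atBot (nhds 0) := by
  have := MeasureTheory.tendsto_integral_filter_of_dominated_convergence
    (μ := volume.restrict (Set.Iic c))
    (F := fun b : ℝ => fun η => phi η * Phi (b - a * η)) (f := fun _ => (0:ℝ)) (bound := phi)
    (l := Filter.atBot)
    (Filter.Eventually.of_forall fun b =>
      ((phi_continuous.mul (Phi_continuous.comp (by fun_prop))).aestronglyMeasurable))
    (Filter.Eventually.of_forall fun b => Filter.Eventually.of_forall fun η => by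
      rw [Real.norm_eq_abs, abs_of_nonneg (mul_nonneg (phi_pos η).le (Phi_nonneg _))]
      calc phi η * Phi (b - a * η) ≤ phi η * 1 :=
            mul_le_mul_of_nonneg_left (Phi_le_one _) (phi_pos η).le
        _ = phi η := mul_one _)
    phi_integrable.integrableOn
    (Filter.Eventually.of_forall fun η => by
      have h1 : Filter.Tendsto (fun b : ℝ => b - a * η) Filter.atBot Filter.atBot :=
        Filter.tendsto_atBot_add_const_right _ _ Filter.tendsto_id
      have := (Phi_tendsto_atBot.comp h1).const_mul (phi η)
      simpa using this)
  simpa [G] using this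

lemma G_continuous_b (c a : ℝ) : Continuous fun b : ℝ => G c a b := by
  refine MeasureTheory.continuous_of_dominated
    (fun b => ((phi_continuous.mul (Phi_continuous.comp (by fun_prop))).aestronglyMeasurable))
    (fun b => Filter.Eventually.of_forall fun η => ?_)
    phi_integrable.integrableOn
    (Filter.Eventually.of_forall fun η =>
      continuous_const.mul (Phi_continuous.comp (by fun_prop)))
  rw [Real.norm_eq_abs, abs_of_nonneg (mul_nonneg (phi_pos η).le (Phi_nonneg _))]
  calc phi η * Phi (b - a * η) ≤ phi η * 1 :=
        mul_le_mul_of_nonneg_left (Phi_le_one _) (phi_pos η).le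
    _ = phi η := mul_one _

/-- For `c ≤ 0`, the function `G(a,b) = ∫_{-∞}^c φ(η) Φ(b - aη) dη` is strictly increasing
in `a` and in `b`; consequently each level set `{(a,b) : G(a,b) = p}` with
`p ∈ (0, Φ(c))` is the graph of a strictly decreasing function `b₂`. -/
theorem stmt_8 (c : ℝ) (hc : c ≤ 0) :
    (∀ b : ℝ, StrictMono fun a : ℝ => G c a b) ∧
    (∀ a : ℝ, StrictMono fun b : ℝ => G c a b) ∧
    (∀ p : ℝ, p ∈ Set.Ioo 0 (Phi c) →
      ∃ b₂ : ℝ → ℝ, StrictAnti b₂ ∧ ∀ a b : ℝ, G c a b = p ↔ b = b₂ a) := by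
  refine ⟨fun b => G_strictMono_a c hc b, fun a => G_strictMono_b c a, fun p hp => ?_⟩
  have hex : ∀ a : ℝ, ∃ b : ℝ, G c a b = p := by
    intro a
    obtain ⟨b₀, hb₀⟩ := ((G_tendsto_atBot c a).eventually_lt_const hp.1).exists
    obtain ⟨b₁, hb₁⟩ := ((G_tendsto_atTop c a).eventually_const_lt hp.2).exists
    have hb01 : b₀ ≤ b₁ :=
      ((G_strictMono_b c a).lt_iff_lt.1 (lt_trans hb₀ hb₁)).le
    obtain ⟨b, _, hb⟩ := intermediate_value_Icc hb01
      ((G_continuous_b c a).continuousOn) ⟨hb₀.le, hb₁.le⟩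
    exact ⟨b, hb⟩
  set b₂ : ℝ → ℝ := fun a => Classical.choose (hex a) with hb₂def
  have hb₂ : ∀ a, G c a (b₂ a) = p := fun a => Classical.choose_spec (hex a)
  refine ⟨b₂, ?_, ?_⟩
  · intro a a' haa
    have h2 : G c a' (b₂ a') < G c a' (b₂ a) := by
      rw [hb₂ a', ← hb₂ a]
      exact G_strictMono_a c hc (b₂ a) haa
    exact (G_strictMono_b c a').lt_iff_lt.1 h2
  · intro a b
    constructor
    · intro h
      exact (G_strictMono_b c a).injective (h.trans (hb₂ a).symm)
    · rintro rfl
      exact hb₂ a
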